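/- arXiv:2202.01674 — 2 statements merged into one kernel-verified Lean document; each statement's English description precedes it below -/
import Mathlib

section
/- The three points (a₁, b₁) = (√3/2, (-3+2√3)/2), (a₂, b₂) = ((-3+√3)/2, (3-√3)/2), (a₃, b₃) = ((3-2√3)/2, -√3/2) are obtained from one another by rotation about the origin by 2π/3; in particular each has Euclidean norm (3√2-√6)/2. -/
open Real

noncomputable def pt (a b : ℝ) : EuclideanSpace ℝ (Fin 2) := WithLp.toLp 2 ![a, b]

/-- Rotation about the origin by `2π/3`. -/
noncomputable def rot (p : EuclideanSpace ℝ (Fin 2)) : EuclideanSpace ℝ (Fin 2) :=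
  pt (-(p 0) / 2 - Real.sqrt 3 / 2 * p 1) (Real.sqrt 3 / 2 * p 0 - p 1 / 2)

lemma pt_eq {a b c d : ℝ} (h1 : a = c) (h2 : b = d) : pt a b = pt c d := by
  rw [h1, h2]

lemma norm_pt (a b : ℝ) : ‖pt a b‖ = Real.sqrt (a ^ 2 + b ^ 2) := by
  rw [EuclideanSpace.norm_eq]
  simp [pt, Fin.sum_univ_two, sq_abs]

lemma sqrt3_sq : Real.sqrt 3 ^ 2 = 3 := Real.sq_sqrt (by norm_num)

lemma norm_val (a b : ℝ) (h : a ^ 2 + b ^ 2 = 6 - 3 * Real.sqrt 3) :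
    ‖pt a b‖ = (3 * Real.sqrt 2 - Real.sqrt 6) / 2 := by
  have h2 : Real.sqrt 2 ^ 2 = 2 := Real.sq_sqrt (by norm_num)
  have h6 : Real.sqrt 6 ^ 2 = 6 := Real.sq_sqrt (by norm_num)
  have h26 : Real.sqrt 2 * Real.sqrt 6 = 2 * Real.sqrt 3 := by
    rw [← Real.sqrt_mul (by norm_num)]
    rw [show (2:ℝ) * 6 = 2^2 * 3 by norm_num, Real.sqrt_mul (by positivity),
      Real.sqrt_sq (by norm_num)]
  have hle : Real.sqrt 6 ≤ 3 * Real.sqrt 2 := by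
    nlinarith [Real.sqrt_nonneg 2, Real.sqrt_nonneg 6]
  have hnn : 0 ≤ (3 * Real.sqrt 2 - Real.sqrt 6) / 2 := by linarith
  have hsq : ((3 * Real.sqrt 2 - Real.sqrt 6) / 2) ^ 2 = a ^ 2 + b ^ 2 := by
    rw [h]; ring_nf; nlinarith [h2, h6, h26]
  rw [norm_pt, ← hsq, Real.sqrt_sq hnn]

/-- The three cut points are obtained from one another by rotation about the
origin by `2π/3`; in particular each has Euclidean norm `(3√2-√6)/2`. -/
theorem cutPoints_rotation :
    rot (pt (Real.sqrt 3 / 2) ((-3 + 2 * Real.sqrt 3) / 2))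
      = pt ((-3 + Real.sqrt 3) / 2) ((3 - Real.sqrt 3) / 2) ∧
    rot (pt ((-3 + Real.sqrt 3) / 2) ((3 - Real.sqrt 3) / 2))
      = pt ((3 - 2 * Real.sqrt 3) / 2) (-(Real.sqrt 3) / 2) ∧
    rot (pt ((3 - 2 * Real.sqrt 3) / 2) (-(Real.sqrt 3) / 2))
      = pt (Real.sqrt 3 / 2) ((-3 + 2 * Real.sqrt 3) / 2) ∧
    ‖pt (Real.sqrt 3 / 2) ((-3 + 2 * Real.sqrt 3) / 2)‖ = (3 * Real.sqrt 2 - Real.sqrt 6) / 2 ∧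
    ‖pt ((-3 + Real.sqrt 3) / 2) ((3 - Real.sqrt 3) / 2)‖ = (3 * Real.sqrt 2 - Real.sqrt 6) / 2 ∧
    ‖pt ((3 - 2 * Real.sqrt 3) / 2) (-(Real.sqrt 3) / 2)‖ = (3 * Real.sqrt 2 - Real.sqrt 6) / 2 := by
  have h3 := sqrt3_sq
  refine ⟨?_, ?_, ?_, ?_, ?_, ?_⟩
  · unfold rot; apply pt_eq <;> simp [pt] <;> nlinarith [h3]
  · unfold rot; apply pt_eq <;> simp [pt] <;> nlinarith [h3]
  · unfold rot; apply pt_eq <;> simp [pt] <;> nlinarith [h3]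
  · exact norm_val _ _ (by nlinarith [h3])
  · exact norm_val _ _ (by nlinarith [h3])
  · exact norm_val _ _ (by nlinarith [h3])
end

section
/- The three pentagons P₁, P₂, P₃ (with vertices as in the unperturbed dissection of the regular unit hexagon) all have perimeter 2 + 3√2 - √6. -/
open Real

noncomputable def pentPerim (p₁ p₂ p₃ p₄ p₅ : EuclideanSpace ℝ (Fin 2)) : ℝ :=
  ‖p₂ - p₁‖ + ‖p₃ - p₂‖ + ‖p₄ - p₃‖ + ‖p₅ - p₄‖ + ‖p₁ - p₅‖

lemma norm_pt_sub (a b c d : ℝ) : ‖pt a b - pt c d‖ = Real.sqrt ((a-c)^2+(b-d)^2) := by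
  rw [EuclideanSpace.norm_eq]
  simp [pt, Fin.sum_univ_two, PiLp.sub_apply, sq_abs]

lemma edge (a b c d v : ℝ) (hv : 0 ≤ v) (h : (a-c)^2+(b-d)^2 = v^2) :
    ‖pt a b - pt c d‖ = v := by
  rw [norm_pt_sub, h, Real.sqrt_sq hv]

set_option maxHeartbeats 1600000 in
/-- The three pentagons of the unperturbed dissection all have perimeter `2 + 3√2 - √6`. -/
theorem perims_P1_P2_P3 :
    pentPerim (pt 0 0) (pt (Real.sqrt 3 / 2) ((-3 + 2 * Real.sqrt 3) / 2))
      (pt (1 / 2) (Real.sqrt 3 / 2)) (pt (-(1 / 2)) (Real.sqrt 3 / 2))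
      (pt ((-3 + Real.sqrt 3) / 2) ((3 - Real.sqrt 3) / 2))
      = 2 + 3 * Real.sqrt 2 - Real.sqrt 6 ∧
    pentPerim (pt 0 0) (pt ((-3 + Real.sqrt 3) / 2) ((3 - Real.sqrt 3) / 2))
      (pt (-1) 0) (pt (-(1 / 2)) (-(Real.sqrt 3) / 2))
      (pt ((3 - 2 * Real.sqrt 3) / 2) (-(Real.sqrt 3) / 2))
      = 2 + 3 * Real.sqrt 2 - Real.sqrt 6 ∧
    pentPerim (pt 0 0) (pt ((3 - 2 * Real.sqrt 3) / 2) (-(Real.sqrt 3) / 2))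
      (pt (1 / 2) (-(Real.sqrt 3) / 2)) (pt 1 0)
      (pt (Real.sqrt 3 / 2) ((-3 + 2 * Real.sqrt 3) / 2))
      = 2 + 3 * Real.sqrt 2 - Real.sqrt 6 := by
  have h2 : Real.sqrt 2 ^ 2 = 2 := Real.sq_sqrt (by norm_num)
  have h3 : Real.sqrt 3 ^ 2 = 3 := Real.sq_sqrt (by norm_num)
  have h6 : Real.sqrt 6 ^ 2 = 6 := Real.sq_sqrt (by norm_num)
  have n2 : (0:ℝ) ≤ Real.sqrt 2 := Real.sqrt_nonneg 2
  have n3 : (0:ℝ) ≤ Real.sqrt 3 := Real.sqrt_nonneg 3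
  have n6 : (0:ℝ) ≤ Real.sqrt 6 := Real.sqrt_nonneg 6
  have h26 : Real.sqrt 2 * Real.sqrt 6 = 2 * Real.sqrt 3 := by
    rw [← Real.sqrt_mul (by norm_num : (0:ℝ) ≤ 2),
      show (2:ℝ) * 6 = 2 ^ 2 * 3 by norm_num,
      Real.sqrt_mul (by positivity), Real.sqrt_sq (by norm_num)]
  have hv1 : (0:ℝ) ≤ (3 * Real.sqrt 2 - Real.sqrt 6) / 2 := by nlinarith
  have hv2 : (0:ℝ) ≤ Real.sqrt 3 - 1 := by nlinarith
  have hv3 : (0:ℝ) ≤ 2 - Real.sqrt 3 := by nlinarith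
  refine ⟨?_, ?_, ?_⟩ <;>
  · unfold pentPerim
    rw [edge _ _ _ _ ((3 * Real.sqrt 2 - Real.sqrt 6) / 2) hv1 (by nlinarith [h2,h3,h6,h26]),
      edge _ _ _ _ (Real.sqrt 3 - 1) hv2 (by nlinarith [h2,h3,h6,h26]),
      edge _ _ _ _ 1 (by norm_num) (by nlinarith [h2,h3,h6,h26]),
      edge _ _ _ _ (2 - Real.sqrt 3) hv3 (by nlinarith [h2,h3,h6,h26]),
      edge _ _ _ _ ((3 * Real.sqrt 2 - Real.sqrt 6) / 2) hv1 (by nlinarith [h2,h3,h6,h26])]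
    ring
end
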